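/- For all real numbers λ > 0, ε > 0 and x, one has λ(exp(x/λ) − 1) ≥ λ(exp(min(x, ε)/λ) − 1) − ε·exp(ε/λ) + max(x, 0)·exp(ε/λ). -/
import Mathlib

/-- For all real `λ > 0`, `ε > 0` and `x`:
`λ * (exp (x / λ) - 1) ≥ λ * (exp (min x ε / λ) - 1) - ε * exp (ε / λ) + max x 0 * exp (ε / λ)`. -/
theorem stmt_6 (lam ε x : ℝ) (hlam : 0 < lam) (hε : 0 < ε) :
    lam * (Real.exp (min x ε / lam) - 1) - ε * Real.exp (ε / lam)
        + max x 0 * Real.exp (ε / lam)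
      ≤ lam * (Real.exp (x / lam) - 1) := by
  rcases le_or_gt x ε with h | h
  · rw [min_eq_left h]
    have hm : max x 0 ≤ ε := max_le h hε.le
    nlinarith [Real.exp_pos (ε / lam)]
  · rw [min_eq_right h.le, max_eq_left (hε.trans h).le]
    have key : Real.exp (ε / lam) * (1 + (x - ε) / lam) ≤ Real.exp (x / lam) := by
      have h1 : (1 : ℝ) + (x - ε) / lam ≤ Real.exp ((x - ε) / lam) := by
        linarith [Real.add_one_le_exp ((x - ε) / lam)]
      calc Real.exp (ε / lam) * (1 + (x - ε) / lam)
          ≤ Real.exp (ε / lam) * Real.exp ((x - ε) / lam) := by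
            exact mul_le_mul_of_nonneg_left h1 (Real.exp_pos _).le
        _ = Real.exp (x / lam) := by
            rw [← Real.exp_add]; ring_nf
    have := mul_le_mul_of_nonneg_left key hlam.le
    have hne : lam ≠ 0 := hlam.ne'
    field_simp at this
    nlinarith [Real.exp_pos (ε / lam)]
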